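/- For any regular binary game and any stationary probability measure P on Σ^∞, the limit lim_{n→∞} H_n/n exists, is finite, and equals lim_{n→∞} H_{1|n} (the limit of the nonincreasing sequence of one-step conditional generalized entropies). -/

import Mathlib

open MeasureTheory ENNReal Filter Topology

noncomputable section

/-- A regular binary game `(Σ, Γ, λ)` with `Σ = {0,1}` (encoded as `Bool`, bit `0 = false`),
prediction space `Γ = [0,1]` and loss function `λ : Σ × [0,1] → [0,∞]` that is continuous,
convex in the prediction, and admits a prediction of finite loss on both outcomes. -/
structure RegularGame where
  loss : Bool → ℝ → ℝ≥0∞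
  continuousOn : ∀ b, ContinuousOn (loss b) (Set.Icc 0 1)
  convex : ∀ b : Bool, ∀ γ₁ ∈ Set.Icc (0:ℝ) 1, ∀ γ₂ ∈ Set.Icc (0:ℝ) 1,
      ∀ t ∈ Set.Icc (0:ℝ) 1,
      loss b (t * γ₁ + (1 - t) * γ₂)
        ≤ ENNReal.ofReal t * loss b γ₁ + ENNReal.ofReal (1 - t) * loss b γ₂
  finite_pred : ∃ γ ∈ Set.Icc (0:ℝ) 1, loss false γ < ⊤ ∧ loss true γ < ⊤

/-- A prediction strategy: for each history length `i`, a map from `i`-bit histories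
to predictions in `[0,1]`. -/
def Strategy : Type := (i : ℕ) → (Fin i → Bool) → Set.Icc (0:ℝ) 1

/-- Cumulative loss of a strategy on the finite string `w`. -/
def strategyLoss (G : RegularGame) {n : ℕ} (w : Fin n → Bool) (S : Strategy) : ℝ≥0∞ :=
  ∑ i : Fin n, G.loss (w i)
    ((S i.val (fun j : Fin i.val => w ⟨j.val, j.isLt.trans i.isLt⟩) : Set.Icc (0:ℝ) 1) : ℝ)

/-- Cylinder set of the finite string `w` in `Σ^∞`. -/
def cyl {n : ℕ} (w : Fin n → Bool) : Set (ℕ → Bool) := {ω | ∀ i : Fin n, ω i.val = w i}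

/-- The `n`-step generalized entropy `H_n = inf_℘ Σ_{w ∈ Σ^n} P(w)·Loss(w,℘)`. -/
def Hn (G : RegularGame) (P : Measure (ℕ → Bool)) (n : ℕ) : ℝ≥0∞ :=
  ⨅ S : Strategy, ∑ w : Fin n → Bool, P (cyl w) * strategyLoss G w S

/-- The generalized conditional entropy
`H_{n|m} = inf_℘ Σ_{w∈Σ^m, x∈Σ^n} P(w·x) · Σ_{i<n} λ(x_i, ℘^{m+i}(w·x_0⋯x_{i−1}))`. -/
def Hcond (G : RegularGame) (P : Measure (ℕ → Bool)) (n m : ℕ) : ℝ≥0∞ :=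
  ⨅ S : Strategy, ∑ w : Fin m → Bool, ∑ x : Fin n → Bool,
    P (cyl (Fin.append w x)) *
      ∑ i : Fin n, G.loss (x i)
        ((S (m + i.val)
          (Fin.append w (fun j : Fin i.val => x ⟨j.val, j.isLt.trans i.isLt⟩)) : Set.Icc (0:ℝ) 1) : ℝ)

/-- The left shift on one-sided sequences. -/
def shiftN : (ℕ → Bool) → (ℕ → Bool) := fun ω n => ω (n + 1)

/-!
A strategy chooses its prediction at each time independently of the other times, so `H_n`
splits as `∑_{i<n} h_i`, where `h_i = H_{1|i}` is the least expected loss of a single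
prediction from a history of length `i`. Stationarity makes `h_i` nonincreasing: at time `i+1`,
the predictor that forgets the first symbol of the history suffers exactly the loss of the
best predictor at time `i`. Being finite, `h_i` converges, and so do its Cesàro means `H_n / n`.
-/

lemma measurable_shiftN : Measurable shiftN :=
  measurable_pi_lambda _ fun n => measurable_pi_apply (n + 1)

lemma sum_measure_inter_preimage_singleton {α β : Type*} [MeasurableSpace α] [Fintype β]
    (μ : Measure α) (s : Set α) {f : α → β} (hf : ∀ b, MeasurableSet (f ⁻¹' {b})) :
    ∑ b, μ (s ∩ f ⁻¹' {b}) = μ s := by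
  have := sum_measure_preimage_singleton (μ := μ.restrict s) Finset.univ fun b _ => hf b
  simpa [Measure.restrict_apply (hf _), Set.inter_comm] using this

section FinTupleSums

variable {β M : Type*} [Fintype β] [AddCommMonoid M] {n : ℕ}

lemma Fintype.sum_fin_succ_snoc (F : (Fin (n + 1) → β) → M) :
    ∑ w, F w = ∑ u : Fin n → β, ∑ b, F (Fin.snoc u b) := by
  rw [← (Fin.snocEquiv fun _ => β).sum_comp, Fintype.sum_prod_type, Finset.sum_comm]
  rfl

lemma Fintype.sum_fin_succ_cons (F : (Fin (n + 1) → β) → M) :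
    ∑ w, F w = ∑ b, ∑ u : Fin n → β, F (Fin.cons b u) := by
  rw [← (Fin.consEquiv fun _ => β).sum_comp, Fintype.sum_prod_type]
  rfl

end FinTupleSums

section Cylinders

variable {n : ℕ}

lemma measurableSet_cyl (w : Fin n → Bool) : MeasurableSet (cyl w) := by
  have : cyl w = ⋂ i : Fin n, (fun ω : ℕ → Bool => ω i) ⁻¹' {w i} := by
    ext ω; simp [cyl]
  rw [this]
  exact .iInter fun i => measurable_pi_apply _ (measurableSet_singleton _)

lemma cyl_snoc (w : Fin n → Bool) (b : Bool) :
    cyl (Fin.snoc w b) = cyl w ∩ (fun ω => ω n) ⁻¹' {b} := by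
  ext ω
  simp [cyl, Fin.forall_fin_succ']

lemma cyl_cons (w : Fin n → Bool) (b : Bool) :
    cyl (Fin.cons b w) = shiftN ⁻¹' cyl w ∩ (fun ω => ω 0) ⁻¹' {b} := by
  ext ω
  simp [cyl, shiftN, Fin.forall_fin_succ, and_comm]

variable (P : Measure (ℕ → Bool))

lemma sum_measure_cyl_snoc (w : Fin n → Bool) : ∑ b, P (cyl (Fin.snoc w b)) = P (cyl w) := by
  simp_rw [cyl_snoc]
  exact sum_measure_inter_preimage_singleton P _ fun b => measurable_pi_apply n (.singleton b)

lemma sum_measure_cyl_cons (hstat : P.map shiftN = P) (w : Fin n → Bool) :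
    ∑ b, P (cyl (Fin.cons b w)) = P (cyl w) := by
  simp_rw [cyl_cons]
  rw [sum_measure_inter_preimage_singleton P _ fun b => measurable_pi_apply 0 (.singleton b),
    ← Measure.map_apply measurable_shiftN (measurableSet_cyl w), hstat]

end Cylinders

section Strategies

instance : Nonempty Strategy := ⟨fun _ _ => ⟨0, le_refl 0, zero_le_one⟩⟩

def Strategy.update (S : Strategy) (n : ℕ) (g : (Fin n → Bool) → Set.Icc (0:ℝ) 1) : Strategy :=
  Function.update (β := fun i => (Fin i → Bool) → Set.Icc (0:ℝ) 1) S n g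

@[simp] lemma Strategy.update_self (S : Strategy) (n : ℕ)
    (g : (Fin n → Bool) → Set.Icc (0:ℝ) 1) : S.update n g n = g :=
  Function.update_self ..

lemma Strategy.update_of_ne (S : Strategy) {n i : ℕ} (g : (Fin n → Bool) → Set.Icc (0:ℝ) 1)
    (h : i ≠ n) : S.update n g i = S i :=
  Function.update_of_ne h ..

lemma Strategy.surjective_apply (n : ℕ) : Function.Surjective fun S : Strategy => S n :=
  fun g => ⟨(Classical.arbitrary Strategy).update n g, Strategy.update_self ..⟩

variable (G : RegularGame)

lemma strategyLoss_snoc {n : ℕ} (u : Fin n → Bool) (a : Bool) (S : Strategy) :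
    strategyLoss G (Fin.snoc u a) S = strategyLoss G u S + G.loss a (S n u) := by
  simp only [strategyLoss, Fin.sum_univ_castSucc, Fin.snoc_castSucc, Fin.snoc_last]
  congr 2
  · funext i
    congr 3
    funext j
    simp [Fin.snoc, j.isLt.trans i.isLt]
  · congr 2
    funext j
    simp [Fin.snoc]

lemma strategyLoss_update_length {n : ℕ} (w : Fin n → Bool) (S : Strategy)
    (g : (Fin n → Bool) → Set.Icc (0:ℝ) 1) :
    strategyLoss G w (S.update n g) = strategyLoss G w S :=
  Finset.sum_congr rfl fun i _ => by rw [Strategy.update_of_ne _ _ i.isLt.ne]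

end Strategies

section Entropy

variable (G : RegularGame) (P : Measure (ℕ → Bool))

def stepLoss (n : ℕ) (g : (Fin n → Bool) → Set.Icc (0:ℝ) 1) : ℝ≥0∞ :=
  ∑ u : Fin n → Bool, ∑ a : Bool, P (cyl (Fin.snoc u a)) * G.loss a (g u)

def oneStepEntropy (n : ℕ) : ℝ≥0∞ :=
  ⨅ g, stepLoss G P n g

lemma sum_strategyLoss_succ (n : ℕ) (S : Strategy) :
    ∑ w : Fin (n + 1) → Bool, P (cyl w) * strategyLoss G w S
      = ∑ w : Fin n → Bool, P (cyl w) * strategyLoss G w S + stepLoss G P n (S n) := by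
  rw [Fintype.sum_fin_succ_snoc]
  simp only [strategyLoss_snoc, mul_add, Finset.sum_add_distrib, stepLoss]
  congr 1
  simp_rw [← Finset.sum_mul, sum_measure_cyl_snoc]

lemma Hn_succ (n : ℕ) : Hn G P (n + 1) = Hn G P n + oneStepEntropy G P n := by
  simp only [Hn, oneStepEntropy, sum_strategyLoss_succ,
    ← (Strategy.surjective_apply n).iInf_comp (stepLoss G P n)]
  refine (ENNReal.iInf_add_iInf fun S₁ S₂ => ⟨S₁.update n (S₂ n), le_of_eq ?_⟩).symm
  simp [strategyLoss_update_length]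

lemma Hn_eq_sum_range (n : ℕ) : Hn G P n = ∑ i ∈ Finset.range n, oneStepEntropy G P i := by
  induction n with
  | zero => simp [Hn, strategyLoss]
  | succ n ih => rw [Hn_succ, ih, Finset.sum_range_succ]

lemma Hcond_one (n : ℕ) : Hcond G P 1 n = oneStepEntropy G P n := by
  rw [Hcond, oneStepEntropy, ← (Strategy.surjective_apply n).iInf_comp]
  refine iInf_congr fun S => Finset.sum_congr rfl fun w _ => ?_
  rw [← (Equiv.funUnique (Fin 1) Bool).symm.sum_comp]
  simp [Fin.append_right_eq_snoc, Fin.append_right_nil _ _ rfl]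

lemma stepLoss_comp_tail (hstat : P.map shiftN = P) (n : ℕ)
    (g : (Fin n → Bool) → Set.Icc (0:ℝ) 1) :
    stepLoss G P (n + 1) (g ∘ Fin.tail) = stepLoss G P n g := by
  rw [stepLoss, Fintype.sum_fin_succ_cons, Finset.sum_comm, stepLoss]
  refine Finset.sum_congr rfl fun u _ => ?_
  simp only [Function.comp_apply, Fin.tail_cons, ← Fin.cons_snoc_eq_snoc_cons]
  rw [Finset.sum_comm]
  simp_rw [← Finset.sum_mul, sum_measure_cyl_cons P hstat]

lemma oneStepEntropy_succ_le (hstat : P.map shiftN = P) (n : ℕ) :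
    oneStepEntropy G P (n + 1) ≤ oneStepEntropy G P n :=
  le_iInf fun g => (iInf_le _ _).trans_eq (stepLoss_comp_tail G P hstat n g)

lemma oneStepEntropy_ne_top [IsFiniteMeasure P] (n : ℕ) : oneStepEntropy G P n ≠ ⊤ := by
  obtain ⟨γ, hγ, hfalse, htrue⟩ := G.finite_pred
  refine ne_top_of_le_ne_top ?_ (iInf_le _ fun _ => ⟨γ, hγ⟩)
  simp [stepLoss, ENNReal.mul_ne_top, measure_ne_top, hfalse.ne, htrue.ne]

end Entropy

lemma ENNReal.Tendsto.cesaro {f : ℕ → ℝ≥0∞} {a : ℝ≥0∞} (hf : ∀ n, f n ≠ ⊤) (ha : a ≠ ⊤)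
    (h : Tendsto f atTop (𝓝 a)) :
    Tendsto (fun n : ℕ => (∑ i ∈ Finset.range n, f i) / n) atTop (𝓝 a) := by
  have hreal := ((ENNReal.tendsto_toReal ha).comp h).cesaro
  have hof := (ENNReal.continuous_ofReal.tendsto _).comp hreal
  rw [ENNReal.ofReal_toReal ha] at hof
  refine hof.congr' ?_
  filter_upwards [eventually_gt_atTop 0] with n hn
  simp only [Function.comp_apply]
  rw [← ENNReal.toReal_sum fun i _ => hf i, ENNReal.ofReal_mul (by positivity),
    ENNReal.ofReal_inv_of_pos (by positivity), ENNReal.ofReal_natCast,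
    ENNReal.ofReal_toReal (ENNReal.sum_ne_top.2 fun i _ => hf i), ENNReal.div_eq_inv_mul]

/-- **Existence of the generalized entropy rate.** For any regular binary game and any
stationary probability measure `P` on `Σ^∞`, the limit `lim_{n→∞} H_n / n` exists, is
finite, and coincides with `lim_{n→∞} H_{1|n}`, the limit of the (nonincreasing)
one-step conditional generalized entropies. -/
theorem generalized_entropy_rate_exists
    (G : RegularGame) (P : Measure (ℕ → Bool)) [IsProbabilityMeasure P]
    (hstat : P.map shiftN = P) :
    ∃ H : ℝ≥0∞, H ≠ ⊤ ∧
      Tendsto (fun n : ℕ => Hn G P n / (n : ℝ≥0∞)) atTop (𝓝 H) ∧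
      Tendsto (fun n : ℕ => Hcond G P 1 n) atTop (𝓝 H) := by
  have hfin := oneStepEntropy_ne_top G P
  have hlim := tendsto_atTop_iInf (antitone_nat_of_succ_le (oneStepEntropy_succ_le G P hstat))
  have hH : ⨅ n, oneStepEntropy G P n ≠ ⊤ := ne_top_of_le_ne_top (hfin 0) (iInf_le _ 0)
  refine ⟨_, hH, ?_, ?_⟩
  · simpa only [Hn_eq_sum_range] using ENNReal.Tendsto.cesaro hfin hH hlim
  · simpa only [Hcond_one] using hlim
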